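/- Fix a ∈ [1,3] and r ∈ (0,1/16], and coefficient functions a_k : {−1,1}^k → [1,a] (with a_0 ≡ 1) for 0 ≤ k ≤ n−1, where n ≥ 1. Let ε ∈ 𝓔_n, let x = f_n(ε) ∈ K_n, and let ε̂ = (ε_1,…,ε_{n−1}). Define Δ₃ = Σ_{ε′ ∈ 𝓔_{n−1}, ε′ ≠ ε̂} Σ_{s ∈ {−1,1}} ( ln|f_n(ε′ s) − x| − ln|f_{n−1}(ε′) − x| ), where ε′ s ∈ 𝓔_n denotes ε′ extended by the letter s in position n. Then |Δ₃| ≤ Σ_{ℓ=1}^{n−1} 2^{ℓ−1} a² r^{2ℓ} / ( 4(1 − ar/(1−r))² − a² r^{2ℓ} ). -/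

import Mathlib

noncomputable section

/-- The sign `±1 : ℝ` associated to a boolean letter. -/
def sgn (b : Bool) : ℝ := if b then 1 else -1

/-- `f_n(ε) = Σ_{k=1}^{n} (a_{k−1}(ε)/2) r^{k−1} ε_k` (0-based: sum over `k < n`). -/
def fN (r : ℝ) (A : ℕ → (ℕ → Bool) → ℝ) (n : ℕ) (ε : ℕ → Bool) : ℝ :=
  ∑ k ∈ Finset.range n, A k ε / 2 * r ^ k * sgn (ε k)

/-- A word of length `n` (element of `𝓔_n`), extended to an infinite word by `false`. -/
def extWord (n : ℕ) (σ : Fin n → Bool) : ℕ → Bool :=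
  fun k => if h : k < n then σ ⟨k, h⟩ else false

/-- The word `ε̂ = (ε_1, …, ε_{n−1})` obtained by deleting the last letter of `ε ∈ 𝓔_n`. -/
def parentWord (n : ℕ) (σ : Fin n → Bool) : Fin (n - 1) → Bool :=
  fun i => σ (Fin.castLE (Nat.sub_le n 1) i)

/-- The word `ε′s ∈ 𝓔_n` obtained by extending `ε′ ∈ 𝓔_{n−1}` by the letter `s` in
position `n`. -/
def childWord (n : ℕ) (σ' : Fin (n - 1) → Bool) (s : Bool) : Fin n → Bool :=
  fun i => if h : (i : ℕ) < n - 1 then σ' ⟨i, h⟩ else s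

/-!
Write `τ` for the parent of `ε` and let `ε′ ≠ τ` first differ from `τ` at position `k`, so that
`ℓ = n - 1 - k ≥ 1`. Letter `k` moves `f` by `a_k r^k ≥ r^k`, while all later letters together move
it by at most `a r^(k+1)/(1-r)`; hence `|f_{n-1}(ε′) - x| ≥ r^k (1 - ar/(1-r))`. The children of
`f_{n-1}(ε′)` are `d ± c` with `d = f_{n-1}(ε′) - x` and `0 < c ≤ a r^(n-1)/2`, and
`log|d+c| + log|d-c| - 2 log|d| = log(1 - c²/d²)` has absolute value at most `c²/(d²-c²)`, which
is at most the `ℓ`-th summand divided by `2^(ℓ-1)`. At most `2^(ℓ-1)` words `ε′` first differ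
from `τ` at `k`.
-/

open Finset PiNat

lemma abs_sgn (b : Bool) : |sgn b| = 1 := by cases b <;> simp [sgn]

lemma abs_sgn_sub_sgn {b b' : Bool} (h : b ≠ b') : |sgn b - sgn b'| = 2 := by
  cases b <;> cases b' <;> simp_all [sgn] <;> norm_num

lemma abs_sum_le_sum_mul_of_fiberwise {ι κ : Type*} [DecidableEq κ] {s : Finset ι}
    {t : Finset κ} {g : ι → κ} {F : ι → ℝ} {B N : κ → ℝ} (hg : ∀ i ∈ s, g i ∈ t)
    (hF : ∀ i ∈ s, |F i| ≤ B (g i)) (hB : ∀ j ∈ t, 0 ≤ B j)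
    (hN : ∀ j ∈ t, (#{i ∈ s | g i = j} : ℝ) ≤ N j) :
    |∑ i ∈ s, F i| ≤ ∑ j ∈ t, N j * B j :=
  calc |∑ i ∈ s, F i| ≤ ∑ i ∈ s, B (g i) := (abs_sum_le_sum_abs _ _).trans (sum_le_sum hF)
    _ = ∑ j ∈ t, #{i ∈ s | g i = j} * B j := by
        rw [← sum_fiberwise_of_maps_to hg]
        refine sum_congr rfl fun j _ => ?_
        rw [sum_congr rfl fun i hi => by rw [(mem_filter.1 hi).2], sum_const, nsmul_eq_mul]
    _ ≤ ∑ j ∈ t, N j * B j := sum_le_sum fun j hj => mul_le_mul_of_nonneg_right (hN j hj) (hB j hj)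

lemma card_filter_eq_on_prefix_le {α : Type*} [Fintype α] [DecidableEq α] {m : ℕ}
    (ρ : Fin m → α) (p : ℕ) :
    #{σ : Fin m → α | ∀ i : Fin m, (i : ℕ) < p → σ i = ρ i} ≤ Fintype.card α ^ (m - p) := by
  let suffix : (Fin m → α) → Fin (m - p) → α := fun σ i => σ ⟨p + i, by omega⟩
  have hinj : Set.InjOn suffix {σ | ∀ i : Fin m, (i : ℕ) < p → σ i = ρ i} := by
    intro σ hσ τ hτ h
    funext i
    by_cases hi : (i : ℕ) < p
    · rw [hσ i hi, hτ i hi]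
    · simpa [suffix, show p + (i - p) = i by omega] using congrFun h ⟨i - p, by omega⟩
  calc _ ≤ #(univ : Finset (Fin (m - p) → α)) :=
        card_le_card_of_injOn suffix (fun _ _ => mem_univ _) (by simpa using hinj)
    _ = Fintype.card α ^ (m - p) := by simp

section Words

variable {m : ℕ}

lemma extWord_of_lt (σ : Fin m → Bool) {k : ℕ} (h : k < m) : extWord m σ k = σ ⟨k, h⟩ :=
  dif_pos h

lemma extWord_of_le (σ : Fin m → Bool) {k : ℕ} (h : m ≤ k) : extWord m σ k = false :=
  dif_neg (by omega)

lemma extWord_injective (m : ℕ) : Function.Injective (extWord m) := fun σ τ h =>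
  funext fun i => by simpa [extWord_of_lt _ i.isLt] using congrFun h i

lemma firstDiff_extWord_lt {σ τ : Fin m → Bool} (h : σ ≠ τ) :
    firstDiff (extWord m σ) (extWord m τ) < m := by
  by_contra! hle
  exact apply_firstDiff_ne ((extWord_injective m).ne h)
    (by rw [extWord_of_le _ hle, extWord_of_le _ hle])

lemma extWord_parentWord (σ : Fin (m + 1) → Bool) {j : ℕ} (hj : j < m) :
    extWord m (parentWord (m + 1) σ) j = extWord (m + 1) σ j := by
  rw [extWord_of_lt _ hj, extWord_of_lt _ (by omega)]
  rfl

lemma extWord_childWord_of_lt (σ' : Fin m → Bool) (s : Bool) {j : ℕ} (hj : j < m) :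
    extWord (m + 1) (childWord (m + 1) σ' s) j = extWord m σ' j := by
  rw [extWord_of_lt _ hj, extWord_of_lt _ (by omega)]
  exact dif_pos hj

lemma extWord_childWord_self (σ' : Fin m → Bool) (s : Bool) :
    extWord (m + 1) (childWord (m + 1) σ' s) m = s := by
  rw [extWord_of_lt _ m.lt_succ_self]
  exact dif_neg (by simp)

lemma card_filter_sub_firstDiff_eq_le (τ : Fin m → Bool) (ℓ : ℕ) :
    #{σ ∈ univ.erase τ | m - firstDiff (extWord m σ) (extWord m τ) = ℓ} ≤ 2 ^ (ℓ - 1) := by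
  let ρ : Fin m → Bool := fun i => if (i : ℕ) < m - ℓ then τ i else !τ i
  have hsub : {σ ∈ univ.erase τ | m - firstDiff (extWord m σ) (extWord m τ) = ℓ} ⊆
      ({σ | ∀ i : Fin m, (i : ℕ) < m - ℓ + 1 → σ i = ρ i} : Finset _) := by
    intro σ hσ
    obtain ⟨hne, hℓ⟩ : σ ≠ τ ∧ m - firstDiff (extWord m σ) (extWord m τ) = ℓ := by simpa using hσ
    have hk := firstDiff_extWord_lt hne
    refine mem_filter.2 ⟨mem_univ σ, fun i hi => ?_⟩
    by_cases hlt : (i : ℕ) < m - ℓ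
    · simpa [ρ, hlt, extWord_of_lt _ i.isLt] using apply_eq_of_lt_firstDiff (x := extWord m σ)
        (y := extWord m τ) (n := i) (by omega)
    · have hi' : (i : ℕ) = firstDiff (extWord m σ) (extWord m τ) := by omega
      have := apply_firstDiff_ne ((extWord_injective m).ne hne)
      rw [← hi', extWord_of_lt _ i.isLt, extWord_of_lt _ i.isLt] at this
      simpa [ρ, hlt, Bool.eq_not_iff] using this
  calc _ ≤ _ := card_le_card hsub
    _ ≤ 2 ^ (m - (m - ℓ + 1)) := by simpa using card_filter_eq_on_prefix_le ρ (m - ℓ + 1)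
    _ ≤ 2 ^ (ℓ - 1) := Nat.pow_le_pow_right two_pos (by omega)

end Words

lemma abs_log_add_log_sub_le {c d : ℝ} (hc : 0 < c) (hcd : c < |d|) :
    |(Real.log |d + c| - Real.log |d|) + (Real.log |d - c| - Real.log |d|)| ≤
      c ^ 2 / (d ^ 2 - c ^ 2) := by
  have hpos : 0 < d ^ 2 - c ^ 2 := by nlinarith [sq_abs d, abs_nonneg d]
  have hd0 : d ≠ 0 := by rintro rfl; nlinarith
  obtain ⟨hdp, hdm⟩ : d + c ≠ 0 ∧ d - c ≠ 0 :=
    mul_ne_zero_iff.1 (by rw [← sq_sub_sq]; exact hpos.ne')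
  have hy : 0 < (d ^ 2 - c ^ 2) / d ^ 2 := by positivity
  have hlog : (Real.log |d + c| - Real.log |d|) + (Real.log |d - c| - Real.log |d|) =
      Real.log ((d ^ 2 - c ^ 2) / d ^ 2) := by
    rw [Real.log_abs, Real.log_abs, Real.log_abs, Real.log_div hpos.ne' (pow_ne_zero 2 hd0),
      show d ^ 2 - c ^ 2 = (d + c) * (d - c) by ring, Real.log_mul hdp hdm, Real.log_pow]
    push_cast
    ring
  rw [hlog, abs_of_nonpos (Real.log_nonpos hy.le ((div_le_one (by positivity)).2 (by nlinarith)))]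
  have h := Real.one_sub_inv_le_log_of_pos hy
  rw [inv_div] at h
  have h' : d ^ 2 / (d ^ 2 - c ^ 2) - 1 = c ^ 2 / (d ^ 2 - c ^ 2) := by field_simp; ring
  linarith

lemma abs_log_add_log_sub_le_of_le {c C L d : ℝ} (hc : 0 < c) (hcC : c ≤ C) (hCL : C < L)
    (hLd : L ≤ |d|) :
    |(Real.log |d + c| - Real.log |d|) + (Real.log |d - c| - Real.log |d|)| ≤
      C ^ 2 / (L ^ 2 - C ^ 2) :=
  (abs_log_add_log_sub_le hc (by linarith)).trans <|
    div_le_div₀ (sq_nonneg C) (pow_le_pow_left₀ hc.le hcC 2) (by nlinarith)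
      (by nlinarith [sq_abs d])

section Expansion

variable {r a : ℝ} {A : ℕ → (ℕ → Bool) → ℝ}

lemma fN_succ (m : ℕ) (ε : ℕ → Bool) :
    fN r A (m + 1) ε = fN r A m ε + A m ε / 2 * r ^ m * sgn (ε m) :=
  sum_range_succ _ _

lemma fN_congr {m : ℕ} (hA : ∀ k < m, ∀ ε ε', (∀ j < k, ε j = ε' j) → A k ε = A k ε')
    {u v : ℕ → Bool} (huv : ∀ j < m, u j = v j) : fN r A m u = fN r A m v :=
  sum_congr rfl fun k hk => by
    have hk := mem_range.1 hk
    rw [hA k hk u v fun j hj => huv j (hj.trans hk), huv k hk]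

lemma abs_fN_sub_fN_le (ha : 0 ≤ a) (hr0 : 0 ≤ r) (hr1 : r < 1) {k m : ℕ} (hkm : k ≤ m)
    {u : ℕ → Bool} (hA : ∀ j < m, |A j u| ≤ a) :
    |fN r A m u - fN r A k u| ≤ a / 2 * r ^ k / (1 - r) := by
  rw [fN, fN, ← sum_Ico_eq_sub _ hkm]
  calc _ ≤ ∑ j ∈ Ico k m, a / 2 * r ^ j := by
        refine (abs_sum_le_sum_abs _ _).trans (sum_le_sum fun j hj => ?_)
        rw [abs_mul, abs_sgn, mul_one, abs_mul, abs_div, abs_two, abs_of_nonneg (pow_nonneg hr0 j)]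
        gcongr
        exact hA j (mem_Ico.1 hj).2
    _ = a / 2 * ∑ j ∈ Ico k m, r ^ j := (mul_sum _ _ _).symm
    _ ≤ a / 2 * (r ^ k / (1 - r)) := by gcongr; exact geom_sum_Ico_le_of_lt_one hr0 hr1
    _ = a / 2 * r ^ k / (1 - r) := by ring

lemma mul_sub_le_abs_fN_sub_fN (ha : 0 ≤ a) (hr0 : 0 ≤ r) (hr1 : r < 1) {k m m' : ℕ}
    (hkm : k < m) (hkm' : k < m') {u v : ℕ → Bool} (hAk : 1 ≤ A k u)
    (hAu : ∀ j < m, |A j u| ≤ a) (hAv : ∀ j < m', |A j v| ≤ a)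
    (hAdep : ∀ j ≤ k, ∀ ε ε', (∀ i < j, ε i = ε' i) → A j ε = A j ε')
    (huv : ∀ j < k, u j = v j) (hne : u k ≠ v k) :
    r ^ k * (1 - a * r / (1 - r)) ≤ |fN r A m u - fN r A m' v| := by
  have hhead : r ^ k ≤ |fN r A (k + 1) u - fN r A (k + 1) v| := by
    rw [fN_succ, fN_succ, fN_congr (fun j hj => hAdep j hj.le) huv, ← hAdep k le_rfl u v huv,
      show ∀ X c s s' : ℝ, X + c * s - (X + c * s') = c * (s - s') by intros; ring, abs_mul,
      abs_sgn_sub_sgn hne, abs_of_nonneg (by positivity)]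
    nlinarith [pow_nonneg hr0 k]
  have htu := abs_fN_sub_fN_le ha hr0 hr1 (by omega : k + 1 ≤ m) hAu
  have htv := abs_fN_sub_fN_le ha hr0 hr1 (by omega : k + 1 ≤ m') hAv
  have htri := abs_add_three (fN r A m u - fN r A m' v) (-(fN r A m u - fN r A (k + 1) u))
    (fN r A m' v - fN r A (k + 1) v)
  rw [abs_neg, show fN r A m u - fN r A m' v + -(fN r A m u - fN r A (k + 1) u) +
    (fN r A m' v - fN r A (k + 1) v) = fN r A (k + 1) u - fN r A (k + 1) v by ring] at htri
  calc r ^ k * (1 - a * r / (1 - r)) = r ^ k - 2 * (a / 2 * r ^ (k + 1) / (1 - r)) := by ring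
    _ ≤ |fN r A m u - fN r A m' v| := by linarith

lemma fN_childWord {m : ℕ} (hAdep : ∀ k ≤ m, ∀ ε ε', (∀ j < k, ε j = ε' j) → A k ε = A k ε')
    (σ' : Fin m → Bool) (s : Bool) :
    fN r A (m + 1) (extWord (m + 1) (childWord (m + 1) σ' s)) =
      fN r A m (extWord m σ') + A m (extWord m σ') / 2 * r ^ m * sgn s := by
  have h : ∀ j < m, extWord (m + 1) (childWord (m + 1) σ' s) j = extWord m σ' j :=
    fun j hj => extWord_childWord_of_lt σ' s hj
  rw [fN_succ, fN_congr (fun k hk => hAdep k hk.le) h, hAdep m le_rfl _ _ h,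
    extWord_childWord_self]

end Expansion

def levelBound (a r : ℝ) (ℓ : ℕ) : ℝ :=
  a ^ 2 * r ^ (2 * ℓ) / (4 * (1 - a * r / (1 - r)) ^ 2 - a ^ 2 * r ^ (2 * ℓ))

section Numerics

variable {a r : ℝ}

lemma half_mul_pow_lt (ha0 : 0 ≤ a) (ha3 : a ≤ 3) (hr0 : 0 < r) (hr1 : r ≤ 1 / 16) {ℓ : ℕ}
    (hℓ : 1 ≤ ℓ) : a / 2 * r ^ ℓ < 1 - a * r / (1 - r) := by
  have hrℓ : r ^ ℓ ≤ r := pow_le_of_le_one hr0.le (by linarith) (by omega)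
  have hsep : a * r / (1 - r) ≤ 1 / 5 := by rw [div_le_iff₀ (by linarith)]; nlinarith
  nlinarith

lemma levelBound_nonneg (ha0 : 0 ≤ a) (ha3 : a ≤ 3) (hr0 : 0 < r) (hr1 : r ≤ 1 / 16) {ℓ : ℕ}
    (hℓ : 1 ≤ ℓ) : 0 ≤ levelBound a r ℓ := by
  have h := half_mul_pow_lt ha0 ha3 hr0 hr1 hℓ
  have hsq := pow_lt_pow_left₀ (show a * r ^ ℓ < 2 * (1 - a * r / (1 - r)) by linarith)
    (by positivity) two_ne_zero
  rw [levelBound, pow_mul']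
  exact div_nonneg (by positivity) (by nlinarith)

lemma sq_div_sq_sub_sq_eq_levelBound (hr0 : r ≠ 0) (k ℓ : ℕ) :
    (a / 2 * r ^ (k + ℓ)) ^ 2 / ((r ^ k * (1 - a * r / (1 - r))) ^ 2 - (a / 2 * r ^ (k + ℓ)) ^ 2)
      = levelBound a r ℓ := by
  rw [levelBound, show (a / 2 * r ^ (k + ℓ)) ^ 2 = (r ^ k) ^ 2 / 4 * (a ^ 2 * r ^ (2 * ℓ)) by ring,
    show (r ^ k * (1 - a * r / (1 - r))) ^ 2 - (r ^ k) ^ 2 / 4 * (a ^ 2 * r ^ (2 * ℓ)) =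
      (r ^ k) ^ 2 / 4 * (4 * (1 - a * r / (1 - r)) ^ 2 - a ^ 2 * r ^ (2 * ℓ)) by ring,
    mul_div_mul_left _ _ (by positivity)]

end Numerics

lemma abs_sum_log_childWord_sub_le {a r : ℝ} {A : ℕ → (ℕ → Bool) → ℝ} {m : ℕ}
    (ha1 : 1 ≤ a) (ha3 : a ≤ 3) (hr0 : 0 < r) (hr1 : r ≤ 1 / 16)
    (hAbd : ∀ k ≤ m, ∀ ε, 1 ≤ A k ε ∧ A k ε ≤ a)
    (hAdep : ∀ k ≤ m, ∀ ε ε', (∀ j < k, ε j = ε' j) → A k ε = A k ε')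
    (σ : Fin (m + 1) → Bool) {σ' : Fin m → Bool} (hσ' : σ' ≠ parentWord (m + 1) σ) :
    |∑ s : Bool, (Real.log |fN r A (m + 1) (extWord (m + 1) (childWord (m + 1) σ' s)) -
          fN r A (m + 1) (extWord (m + 1) σ)| -
        Real.log |fN r A m (extWord m σ') - fN r A (m + 1) (extWord (m + 1) σ)|)| ≤
      levelBound a r (m - firstDiff (extWord m σ') (extWord m (parentWord (m + 1) σ))) := by
  set u := extWord m σ'
  set v := extWord (m + 1) σ
  set k := firstDiff u (extWord m (parentWord (m + 1) σ))
  have hk : k < m := firstDiff_extWord_lt hσ'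
  obtain ⟨ℓ, hℓ, hm⟩ : ∃ ℓ, 1 ≤ ℓ ∧ m = k + ℓ := ⟨m - k, by omega, by omega⟩
  have hsep : r ^ k * (1 - a * r / (1 - r)) ≤ |fN r A m u - fN r A (m + 1) v| := by
    have hAa : ∀ j ≤ m, ∀ ε, |A j ε| ≤ a := fun j hj ε =>
      abs_le.2 ⟨by linarith [(hAbd j hj ε).1], (hAbd j hj ε).2⟩
    refine mul_sub_le_abs_fN_sub_fN (by linarith) hr0.le (by linarith) hk (by omega)
      (hAbd k hk.le u).1 (fun j hj => hAa j hj.le u) (fun j hj => hAa j (by omega) v)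
      (fun j hj => hAdep j (by omega)) (fun j hj => ?_) ?_
    · exact (apply_eq_of_lt_firstDiff hj).trans (extWord_parentWord σ (by omega))
    · rw [show v k = _ from (extWord_parentWord σ hk).symm]
      exact apply_firstDiff_ne ((extWord_injective _).ne hσ')
  set d := fN r A m u - fN r A (m + 1) v
  set c := A m u / 2 * r ^ m
  have hchild : ∀ s, fN r A (m + 1) (extWord (m + 1) (childWord (m + 1) σ' s)) -
      fN r A (m + 1) v = d + c * sgn s := fun s => by rw [fN_childWord hAdep]; ring
  obtain ⟨hc1, hca⟩ := hAbd m le_rfl u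
  have hrpow : 0 < r ^ m := pow_pos hr0 _
  rw [Fintype.sum_bool, hchild, hchild, show m - k = ℓ by omega,
    ← sq_div_sq_sub_sq_eq_levelBound hr0.ne' k ℓ, ← hm]
  simp only [sgn, if_true, Bool.false_eq_true, if_false, mul_one, mul_neg_one, ← sub_eq_add_neg]
  refine abs_log_add_log_sub_le_of_le (by positivity) (by simp only [c]; gcongr) ?_ hsep
  calc a / 2 * r ^ m = r ^ k * (a / 2 * r ^ ℓ) := by rw [hm]; ring
    _ < r ^ k * (1 - a * r / (1 - r)) := by
        gcongr
        exact half_mul_pow_lt (by linarith) ha3 hr0 hr1 hℓ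

theorem stmt5_general (a r : ℝ) (ha1 : 1 ≤ a) (ha3 : a ≤ 3) (hr0 : 0 < r) (hr1 : r ≤ 1 / 16)
    (n : ℕ) (hn : 1 ≤ n)
    (A : ℕ → (ℕ → Bool) → ℝ)
    (hAbd : ∀ k, k ≤ n - 1 → ∀ ε, 1 ≤ A k ε ∧ A k ε ≤ a)
    (hAdep : ∀ k, k ≤ n - 1 → ∀ ε ε', (∀ j < k, ε j = ε' j) → A k ε = A k ε')
    (σ : Fin n → Bool) (x Δ₃ : ℝ)
    (hx : x = fN r A n (extWord n σ))
    (hΔ₃ : Δ₃ = ∑ σ' ∈ Finset.univ.erase (parentWord n σ), ∑ s : Bool,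
        (Real.log |fN r A n (extWord n (childWord n σ' s)) - x| -
          Real.log |fN r A (n - 1) (extWord (n - 1) σ') - x|)) :
    |Δ₃| ≤ ∑ ℓ ∈ Finset.Icc 1 (n - 1),
        (2 : ℝ) ^ (ℓ - 1) * a ^ 2 * r ^ (2 * ℓ) /
          (4 * (1 - a * r / (1 - r)) ^ 2 - a ^ 2 * r ^ (2 * ℓ)) := by
  obtain ⟨m, rfl⟩ : ∃ m, n = m + 1 := ⟨n - 1, by omega⟩
  subst hx hΔ₃
  simp only [Nat.add_sub_cancel] at hAbd hAdep ⊢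
  let level : (Fin m → Bool) → ℕ := fun σ' =>
    m - firstDiff (extWord m σ') (extWord m (parentWord (m + 1) σ))
  refine (abs_sum_le_sum_mul_of_fiberwise (t := Icc 1 m) (g := level)
    (B := levelBound a r) (N := fun ℓ => 2 ^ (ℓ - 1))
    (fun σ' hσ' => ?_) (fun σ' hσ' => ?_) (fun ℓ hℓ => ?_) (fun ℓ _ => ?_)).trans_eq ?_
  · have h : firstDiff (extWord m σ') (extWord m (parentWord (m + 1) σ)) < m :=
      firstDiff_extWord_lt (ne_of_mem_erase hσ')
    simp only [level, mem_Icc]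
    omega
  · exact abs_sum_log_childWord_sub_le ha1 ha3 hr0 hr1 hAbd hAdep σ (ne_of_mem_erase hσ')
  · exact levelBound_nonneg (by linarith) ha3 hr0 hr1 (mem_Icc.1 hℓ).1
  · exact_mod_cast card_filter_sub_firstDiff_eq_le _ ℓ
  · exact sum_congr rfl fun ℓ _ => by rw [levelBound]; ring

/-- With `a ∈ [1,3]`, `r ∈ (0,1/16]`, coefficients `a_k(ε) ∈ [1,a]` (depending
only on the first `k` letters, `a_0 ≡ 1`) for `k ≤ n−1`, `x = f_n(ε) ∈ K_n`, and
`ε̂ = (ε_1,…,ε_{n−1})`, the quantity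
`Δ₃ = Σ_{ε′ ∈ 𝓔_{n−1}, ε′ ≠ ε̂} Σ_{s ∈ {−1,1}} ( ln|f_n(ε′s) − x| − ln|f_{n−1}(ε′) − x| )`
satisfies `|Δ₃| ≤ Σ_{ℓ=1}^{n−1} 2^{ℓ−1} a² r^{2ℓ} / ( 4(1 − ar/(1−r))² − a² r^{2ℓ} )`. -/
theorem stmt5 (a r : ℝ) (ha1 : 1 ≤ a) (ha3 : a ≤ 3) (hr0 : 0 < r) (hr1 : r ≤ 1 / 16)
    (n : ℕ) (hn : 1 ≤ n)
    (A : ℕ → (ℕ → Bool) → ℝ)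
    (hA0 : ∀ ε, A 0 ε = 1)
    (hAbd : ∀ k, k ≤ n - 1 → ∀ ε, 1 ≤ A k ε ∧ A k ε ≤ a)
    (hAdep : ∀ k, k ≤ n - 1 → ∀ ε ε', (∀ j < k, ε j = ε' j) → A k ε = A k ε')
    (σ : Fin n → Bool) (x Δ₃ : ℝ)
    (hx : x = fN r A n (extWord n σ))
    (hΔ₃ : Δ₃ = ∑ σ' ∈ Finset.univ.erase (parentWord n σ), ∑ s : Bool,
        (Real.log |fN r A n (extWord n (childWord n σ' s)) - x| -
          Real.log |fN r A (n - 1) (extWord (n - 1) σ') - x|)) :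
    |Δ₃| ≤ ∑ ℓ ∈ Finset.Icc 1 (n - 1),
        (2 : ℝ) ^ (ℓ - 1) * a ^ 2 * r ^ (2 * ℓ) /
          (4 * (1 - a * r / (1 - r)) ^ 2 - a ^ 2 * r ^ (2 * ℓ)) :=
  stmt5_general a r ha1 ha3 hr0 hr1 n hn A hAbd hAdep σ x Δ₃ hx hΔ₃
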